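/- For any graph H with vertex set {1,2,...,k} and any δ > 0, there exist a positive constant ε and an integer n_0 such that the following holds. Let n ≥ n_0 and let G be a graph whose vertex set is a disjoint union V_1 ∪ V_2 ∪ ... ∪ V_k of sets of size n. Assume that for each edge ij of H, the bipartite subgraph of G induced between V_i and V_j is ε-regular with density d_{ij}. Then the number G(H) of canonical copies of H in G satisfies |G(H) - (∏_{ij ∈ E(H)} d_{ij})·n^k| ≤ δ·n^k. -/

import Mathlib

open Finset
open scoped Classical

noncomputable def eBetween {α : Type*} [Fintype α] (G : SimpleGraph α) (U W : Finset α) : ℕ :=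
  ((U ×ˢ W).filter fun q => G.Adj q.1 q.2).card

noncomputable def dens {α : Type*} [Fintype α] (G : SimpleGraph α) (U W : Finset α) : ℝ :=
  (eBetween G U W : ℝ) / ((U.card : ℝ) * (W.card : ℝ))

/-- The pair `(U, W)` is `ε`-regular in `G`. -/
def RegularPair {α : Type*} [Fintype α] (G : SimpleGraph α) (ε : ℝ) (U W : Finset α) : Prop :=
  ∀ U' ⊆ U, ∀ W' ⊆ W, ε * (U.card : ℝ) ≤ (U'.card : ℝ) → ε * (W.card : ℝ) ≤ (W'.card : ℝ) →
    |dens G U' W' - dens G U W| ≤ ε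

/-- The `i`-th part `V_i = {i} × Fin n` of the vertex set `Fin k × Fin n`. -/
def part (k n : ℕ) (i : Fin k) : Finset (Fin k × Fin n) :=
  Finset.univ.filter fun v => v.1 = i

/-- The number of canonical copies of `H` in `G`: tuples `(v_1, …, v_k)` with `v_i ∈ V_i`
and `v_i v_j` adjacent in `G` for every edge `ij` of `H`. -/
noncomputable def canonCount {k n : ℕ} (H : SimpleGraph (Fin k))
    (G : SimpleGraph (Fin k × Fin n)) : ℕ :=
  (Finset.univ.filter fun f : Fin k → Fin n =>
    ∀ i j, H.Adj i j → G.Adj (i, f i) (j, f j)).card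

/-!
Write the number of canonical copies as `∑_f ∏_{ij ∈ E(H)} 1[f_i f_j ∈ G]` over all tuples `f`,
and replace the indicators by the densities `d_ij` one edge at a time. One replacement changes the
sum by `∑_f (1[f_i f_j ∈ G] - d_ij) · ∏_{rest} 1[…]`. Once every coordinate other than `i` and `j`
is fixed, the remaining product is the indicator of a rectangle `A × B ⊆ V_i × V_j`, because no
other edge sees both `i` and `j`; the inner sum is then `e(A, B) - d_ij |A| |B|`, which
`ε`-regularity bounds by `ε n²` (trivially when `A` or `B` is small). Summing over the `n^(k-2)`
outer coordinates and over the edges of `H` gives an error of at most `|E(H)| ε n^k`.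
-/

section Density

variable {α : Type*} [Fintype α] (G : SimpleGraph α)

lemma eBetween_le_card_mul_card (U W : Finset α) : eBetween G U W ≤ #U * #W :=
  (card_filter_le _ _).trans_eq (card_product U W)

lemma dens_nonneg (U W : Finset α) : 0 ≤ dens G U W := by
  unfold _root_.dens; positivity

lemma dens_le_one (U W : Finset α) : dens G U W ≤ 1 :=
  div_le_one_of_le₀ (by exact_mod_cast eBetween_le_card_mul_card G U W) (by positivity)

lemma eBetween_eq_dens_mul (U W : Finset α) :
    (eBetween G U W : ℝ) = dens G U W * (#U * #W) := by
  rcases eq_or_ne ((#U : ℝ) * #W) 0 with h | h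
  · have : (eBetween G U W : ℝ) ≤ #U * #W := by exact_mod_cast eBetween_le_card_mul_card G U W
    rw [h, mul_zero]
    exact le_antisymm (h ▸ this) (Nat.cast_nonneg _)
  · exact (div_mul_cancel₀ _ h).symm

lemma eBetween_eq_sum (U W : Finset α) :
    (eBetween G U W : ℝ) = ∑ u ∈ U, ∑ w ∈ W, if G.Adj u w then 1 else 0 := by
  rw [← sum_product', sum_boole]
  rfl

theorem RegularPair.abs_eBetween_sub_le {ε : ℝ} (hε : 0 ≤ ε) {U W : Finset α}
    (hreg : RegularPair G ε U W) {A B : Finset α} (hA : A ⊆ U) (hB : B ⊆ W) :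
    |(eBetween G A B : ℝ) - dens G U W * (#A * #B)| ≤ ε * (#U * #W) := by
  have hAU : (#A : ℝ) ≤ #U := by exact_mod_cast card_le_card hA
  have hBW : (#B : ℝ) ≤ #W := by exact_mod_cast card_le_card hB
  by_cases hsmall : (#A : ℝ) < ε * #U ∨ (#B : ℝ) < ε * #W
  · have hAB : (#A : ℝ) * #B ≤ ε * (#U * #W) := by
      rcases hsmall with h | h <;> nlinarith [(#A).cast_nonneg (α := ℝ), (#B).cast_nonneg (α := ℝ)]
    have he : (eBetween G A B : ℝ) ≤ #A * #B := by
      exact_mod_cast eBetween_le_card_mul_card G A B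
    refine abs_sub_le_of_nonneg_of_le (Nat.cast_nonneg _) (he.trans hAB)
      (mul_nonneg (dens_nonneg G U W) (by positivity)) (le_trans ?_ hAB)
    exact mul_le_of_le_one_left (by positivity) (dens_le_one G U W)
  · push Not at hsmall
    rw [eBetween_eq_dens_mul, ← sub_mul, abs_mul,
      abs_of_nonneg (by positivity : (0 : ℝ) ≤ #A * #B)]
    calc _ ≤ ε * (#A * #B) := by gcongr; exact hreg A hA B hB hsmall.1 hsmall.2
      _ ≤ ε * (#U * #W) := by gcongr

end Density

theorem sum_sum_update_eq_card_smul {ι β M : Type*} [DecidableEq ι] [Fintype ι] [Fintype β]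
    [AddCommMonoid M] (Y : (ι → β) → M) (i : ι) :
    ∑ f, ∑ b, Y (Function.update f i b) = Fintype.card β • ∑ f, Y f := by
  let e := (Equiv.funSplitAt i β).symm
  have hupdate : ∀ a b r, Function.update (e (a, r)) i b = e (b, r) := by
    intro a b r
    ext l
    by_cases hl : l = i <;> simp [e, hl]
  rw [← e.sum_comp, ← e.sum_comp, Fintype.sum_prod_type, Fintype.sum_prod_type]
  simp only [hupdate, sum_const, card_univ]
  rw [sum_comm]

theorem card_sq_mul_abs_sum_le {ι β : Type*} [DecidableEq ι] [Fintype ι] [Fintype β]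
    (X : (ι → β) → ℝ) (i j : ι) {C : ℝ}
    (hslice : ∀ f, |∑ a, ∑ b, X (Function.update (Function.update f i a) j b)| ≤ C) :
    (Fintype.card β : ℝ) ^ 2 * |∑ f, X f| ≤ Fintype.card β ^ Fintype.card ι * C := by
  have hsum : ∑ f, ∑ a, ∑ b, X (Function.update (Function.update f i a) j b) =
      (Fintype.card β : ℝ) ^ 2 * ∑ f, X f := by
    rw [sum_sum_update_eq_card_smul (fun g => ∑ b, X (Function.update g j b)),
      sum_sum_update_eq_card_smul, smul_smul, nsmul_eq_mul]
    push_cast; ring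
  rw [← abs_of_nonneg (by positivity : (0 : ℝ) ≤ Fintype.card β ^ 2), ← abs_mul, ← hsum]
  calc _ ≤ ∑ f : ι → β, C := (abs_sum_le_sum_abs _ _).trans (sum_le_sum fun f _ => hslice f)
    _ = _ := by simp

theorem filter_eq_image_fst_product_image_snd {α β : Type*} [Fintype α] [Fintype β]
    [DecidableEq α] [DecidableEq β] (P : α × β → Prop) [DecidablePred P]
    (hswap : ∀ a b a' b', P (a, b) → P (a', b') → P (a, b')) :
    univ.filter P = (univ.filter P).image Prod.fst ×ˢ (univ.filter P).image Prod.snd := by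
  ext ⟨a, b⟩
  simp only [mem_filter, mem_univ, true_and, mem_product, mem_image, Prod.exists,
    exists_and_right, exists_eq_right]
  exact ⟨fun h => ⟨⟨b, h⟩, ⟨a, h⟩⟩, fun ⟨⟨b', hb'⟩, ⟨a', ha'⟩⟩ => hswap a b' a' b hb' ha'⟩

section Partite

variable {k n : ℕ} (G : SimpleGraph (Fin k × Fin n))

lemma card_part (i : Fin k) : #(part k n i) = n := by
  rw [part, card_filter, Fintype.sum_prod_type]
  simp [apply_ite]

lemma map_sectR_subset_part (i : Fin k) (A : Finset (Fin n)) :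
    A.map (Function.Embedding.sectR i (Fin n)) ⊆ part k n i := by
  intro v hv
  obtain ⟨a, -, rfl⟩ := mem_map.1 hv
  simp [part]

theorem RegularPair.abs_sum_sum_sub_le {ε : ℝ} (hε : 0 ≤ ε) {i j : Fin k}
    (hreg : RegularPair G ε (part k n i) (part k n j)) (A B : Finset (Fin n)) :
    |∑ a ∈ A, ∑ b ∈ B,
        ((if G.Adj (i, a) (j, b) then 1 else 0) - dens G (part k n i) (part k n j))|
      ≤ ε * n ^ 2 := by
  have h := hreg.abs_eBetween_sub_le G hε (map_sectR_subset_part i A) (map_sectR_subset_part j B)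
  rw [eBetween_eq_sum, sum_map, card_map, card_map, card_part, card_part] at h
  simp only [sum_map, Function.Embedding.sectR_apply] at h
  simp only [sum_sub_distrib, sum_const, nsmul_eq_mul]
  convert h using 2 <;> ring

end Partite

section Counting

variable {k n : ℕ} (G : SimpleGraph (Fin k × Fin n))

noncomputable def edgeIndicator (q : Fin k × Fin k) (f : Fin k → Fin n) : ℝ :=
  if G.Adj (q.1, f q.1) (q.2, f q.2) then 1 else 0

lemma prod_edgeIndicator (S : Finset (Fin k × Fin k)) (f : Fin k → Fin n) :
    ∏ q ∈ S, edgeIndicator G q f = if ∀ q ∈ S, G.Adj (q.1, f q.1) (q.2, f q.2) then 1 else 0 := by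
  unfold edgeIndicator
  convert prod_boole

lemma ne_and_ne_or_ne_and_ne_of_lt {i j a b : Fin k} (hij : i < j) (hab : a < b)
    (hne : (a, b) ≠ (i, j)) : (a ≠ j ∧ b ≠ j) ∨ (a ≠ i ∧ b ≠ i) := by
  grind

open Function in
theorem abs_sum_sum_update_le {ε : ℝ} (hε : 0 ≤ ε) {i j : Fin k} (hij : i < j)
    (hreg : RegularPair G ε (part k n i) (part k n j)) {S : Finset (Fin k × Fin k)}
    (hS : ∀ q ∈ S, q.1 < q.2) (hijS : (i, j) ∉ S) (f : Fin k → Fin n) :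
    |∑ a, ∑ b, (edgeIndicator G (i, j) (update (update f i a) j b) -
        dens G (part k n i) (part k n j)) * ∏ q ∈ S, edgeIndicator G q (update (update f i a) j b)|
      ≤ ε * n ^ 2 := by
  set g : Fin n → Fin n → Fin k → Fin n := fun a b => update (update f i a) j b
  set P : Fin n × Fin n → Prop := fun p => ∀ q ∈ S, G.Adj (q.1, g p.1 p.2 q.1) (q.2, g p.1 p.2 q.2)
  -- an edge of `S` sees at most one of the coordinates `i`, `j`, so `P` cuts out a rectangle
  have hswap : ∀ a b a' b', P (a, b) → P (a', b') → P (a, b') := by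
    intro a b a' b' h h' q hq
    rcases ne_and_ne_or_ne_and_ne_of_lt hij (hS q hq) (ne_of_mem_of_not_mem hq hijS) with
      ⟨h₁, h₂⟩ | ⟨h₁, h₂⟩
    · have hg : ∀ l ≠ j, g a b' l = g a b l := fun l hl => by simp [g, hl]
      simpa only [hg _ h₁, hg _ h₂] using h q hq
    · have hg : ∀ l ≠ i, g a b' l = g a' b' l := fun l hl => by
        by_cases hlj : l = j <;> simp [g, hl, hlj]
      simpa only [hg _ h₁, hg _ h₂] using h' q hq
  have hterm : ∀ a b, (edgeIndicator G (i, j) (g a b) - dens G (part k n i) (part k n j)) *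
      ∏ q ∈ S, edgeIndicator G q (g a b) = if P (a, b) then
        ((if G.Adj (i, a) (j, b) then 1 else 0) - dens G (part k n i) (part k n j)) else 0 := by
    intro a b
    have hgi : g a b i = a := by simp [g, hij.ne]
    have hgj : g a b j = b := by simp [g]
    rw [prod_edgeIndicator, edgeIndicator, hgi, hgj]
    split_ifs <;> simp
  rw [Fintype.sum_congr _ _ fun a => Fintype.sum_congr _ _ fun b => hterm a b,
    ← Fintype.sum_prod_type' (f := fun a b => if P (a, b) then _ else 0), ← sum_filter,
    filter_eq_image_fst_product_image_snd P hswap, sum_product]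
  exact hreg.abs_sum_sum_sub_le G hε _ _

theorem abs_sum_edgeIndicator_sub_mul_prod_le {ε : ℝ} (hε : 0 ≤ ε) {i j : Fin k} (hij : i < j)
    (hreg : RegularPair G ε (part k n i) (part k n j)) {S : Finset (Fin k × Fin k)}
    (hS : ∀ q ∈ S, q.1 < q.2) (hijS : (i, j) ∉ S) :
    |∑ f, (edgeIndicator G (i, j) f - dens G (part k n i) (part k n j)) *
        ∏ q ∈ S, edgeIndicator G q f| ≤ ε * n ^ k := by
  rcases Nat.eq_zero_or_pos n with rfl | hn
  · have : IsEmpty (Fin k → Fin 0) := ⟨fun f => (f i).elim0⟩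
    simp [i.pos.ne']
  have h := card_sq_mul_abs_sum_le (fun f => (edgeIndicator G (i, j) f -
    dens G (part k n i) (part k n j)) * ∏ q ∈ S, edgeIndicator G q f) i j
    (abs_sum_sum_update_le G hε hij hreg hS hijS)
  rw [Fintype.card_fin, Fintype.card_fin] at h
  exact le_of_mul_le_mul_left (h.trans_eq (by ring)) (by positivity)

theorem abs_sum_prod_edgeIndicator_sub_le {ε : ℝ} (hε : 0 ≤ ε) (E : Finset (Fin k × Fin k))
    (hE : ∀ q ∈ E, q.1 < q.2) (hreg : ∀ q ∈ E, RegularPair G ε (part k n q.1) (part k n q.2)) :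
    |∑ f, ∏ q ∈ E, edgeIndicator G q f -
        (∏ q ∈ E, dens G (part k n q.1) (part k n q.2)) * n ^ k| ≤ #E * (ε * n ^ k) := by
  induction E using Finset.induction_on with
  | empty => simp
  | insert q E hqE ih =>
    set d : Fin k × Fin k → ℝ := fun q => dens G (part k n q.1) (part k n q.2)
    have hstep := abs_sum_edgeIndicator_sub_mul_prod_le G hε (hE q (mem_insert_self q E))
      (hreg q (mem_insert_self q E)) (fun q' hq' => hE q' (mem_insert_of_mem hq')) hqE
    have hrest := ih (fun q' hq' => hE q' (mem_insert_of_mem hq'))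
      (fun q' hq' => hreg q' (mem_insert_of_mem hq'))
    have hsplit : ∑ f, ∏ q' ∈ insert q E, edgeIndicator G q' f - (∏ q' ∈ insert q E, d q') * n ^ k
        = ∑ f, (edgeIndicator G q f - d q) * ∏ q' ∈ E, edgeIndicator G q' f +
          d q * (∑ f, ∏ q' ∈ E, edgeIndicator G q' f - (∏ q' ∈ E, d q') * n ^ k) := by
      simp only [prod_insert hqE, sub_mul, sum_sub_distrib, mul_sub, mul_sum]
      ring
    have hd₀ : 0 ≤ d q := dens_nonneg G _ _
    have hd₁ : d q ≤ 1 := dens_le_one G _ _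
    rw [hsplit, card_insert_of_notMem hqE, Nat.cast_succ]
    calc _ ≤ ε * n ^ k + d q * (#E * (ε * n ^ k)) := by
          refine (abs_add_le _ _).trans (add_le_add hstep ?_)
          rw [abs_mul, abs_of_nonneg hd₀]
          exact mul_le_mul_of_nonneg_left hrest hd₀
      _ ≤ _ := by nlinarith [show 0 ≤ (#E : ℝ) * (ε * n ^ k) by positivity]

lemma canonCount_eq_sum_prod_edgeIndicator (H : SimpleGraph (Fin k)) :
    (canonCount H G : ℝ) =
      ∑ f, ∏ q ∈ univ.filter (fun q : Fin k × Fin k => H.Adj q.1 q.2 ∧ q.1 < q.2),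
        edgeIndicator G q f := by
  simp only [prod_edgeIndicator, canonCount]
  rw [sum_boole]
  congr 3
  ext f
  simp only [mem_filter, mem_univ, true_and, and_imp, Prod.forall]
  refine ⟨fun h a b hab _ => h a b hab, fun h a b hab => ?_⟩
  rcases lt_trichotomy a b with hlt | rfl | hgt
  · exact h a b hab hlt
  · exact absurd hab H.irrefl
  · exact (h b a hab.symm hgt).symm

end Counting

theorem stmt13 (k : ℕ) (H : SimpleGraph (Fin k)) (δ : ℝ) (hδ : 0 < δ) :
    ∃ (ε : ℝ) (n₀ : ℕ), 0 < ε ∧ ∀ n : ℕ, n₀ ≤ n →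
      ∀ G : SimpleGraph (Fin k × Fin n),
        (∀ i j : Fin k, H.Adj i j → RegularPair G ε (part k n i) (part k n j)) →
        |(canonCount H G : ℝ) -
            (∏ q ∈ Finset.univ.filter
                (fun q : Fin k × Fin k => H.Adj q.1 q.2 ∧ q.1 < q.2),
              dens G (part k n q.1) (part k n q.2)) * (n : ℝ) ^ k| ≤
          δ * (n : ℝ) ^ k := by
  set E := univ.filter fun q : Fin k × Fin k => H.Adj q.1 q.2 ∧ q.1 < q.2
  refine ⟨δ / (#E + 1), 0, by positivity, fun n _ G hreg => ?_⟩
  rw [canonCount_eq_sum_prod_edgeIndicator]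
  refine (abs_sum_prod_edgeIndicator_sub_le G (by positivity) E
    (fun q hq => (mem_filter.1 hq).2.2) (fun q hq => hreg q.1 q.2 (mem_filter.1 hq).2.1)).trans ?_
  have hE : (#E : ℝ) / (#E + 1) ≤ 1 := div_le_one_of_le₀ (by linarith) (by positivity)
  calc (#E : ℝ) * (δ / (#E + 1) * n ^ k) = #E / (#E + 1) * (δ * n ^ k) := by ring
    _ ≤ δ * n ^ k := mul_le_of_le_one_left (by positivity) hE
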